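/- arXiv:2009.02802 — 2 statements merged into one kernel-verified Lean document; each statement's English description precedes it below -/
import Mathlib

section
/- Fix y > 0 and k ∈ ℕ. The function f : ℝ → ℂ defined by f(t) = k! / (y + i t)^{k+1} is positive definite; that is, for all n, all complex numbers c₁,…,cₙ, and all real points t₁,…,tₙ, the sum ∑_{j,l} f(t_j − t_l) c_j conj(c_l) has nonnegative real part and is a nonnegative real number. -/
/-!
For `0 < Re a` the Laplace integral `∫₀^∞ x^k e^{-a x} dx = k! / a^(k+1)` holds (integrate by parts
in `k`). Taking `a = y + i s` exhibits `f` as the Fourier transform of the nonnegative integrable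
weight `x^k e^{-y x}` on `(0, ∞)`, so the quadratic form equals
`∫₀^∞ x^k e^{-y x} |∑ⱼ cⱼ e^{-i tⱼ x}|² dx`, a nonnegative real number.
-/

open Complex ComplexConjugate MeasureTheory Set Filter Topology

lemma norm_ofReal_pow_mul_cexp_neg_mul (m : ℕ) (a : ℂ) {x : ℝ} (hx : 0 ≤ x) :
    ‖(x : ℂ) ^ m * cexp (-(a * x))‖ = x ^ m * Real.exp (-(a.re * x)) := by
  simp [Complex.norm_exp, abs_of_nonneg hx]

lemma integrableOn_pow_mul_exp_neg_mul_Ioi (m : ℕ) {b : ℝ} (hb : 0 < b) :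
    IntegrableOn (fun x : ℝ => x ^ m * Real.exp (-(b * x))) (Ioi 0) := by
  simpa [Real.rpow_natCast] using
    integrableOn_rpow_mul_exp_neg_mul_rpow (s := m) (p := 1)
      (by linarith [m.cast_nonneg (α := ℝ)]) one_pos hb

lemma integrableOn_ofReal_pow_mul_cexp_neg_mul_Ioi (m : ℕ) {a : ℂ} (ha : 0 < a.re) :
    IntegrableOn (fun x : ℝ => (x : ℂ) ^ m * cexp (-(a * x))) (Ioi 0) := by
  refine (integrableOn_pow_mul_exp_neg_mul_Ioi m ha).mono' (by fun_prop) ?_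
  filter_upwards [ae_restrict_mem measurableSet_Ioi] with x hx
  exact (norm_ofReal_pow_mul_cexp_neg_mul m a (le_of_lt hx)).le

lemma tendsto_ofReal_pow_mul_cexp_neg_mul_atTop (m : ℕ) {a : ℂ} (ha : 0 < a.re) :
    Tendsto (fun x : ℝ => (x : ℂ) ^ m * cexp (-(a * x))) atTop (𝓝 0) := by
  rw [tendsto_zero_iff_norm_tendsto_zero]
  refine (tendsto_rpow_mul_exp_neg_mul_atTop_nhds_zero m a.re ha).congr' ?_
  filter_upwards [eventually_ge_atTop 0] with x hx
  rw [norm_ofReal_pow_mul_cexp_neg_mul m a hx, Real.rpow_natCast, neg_mul]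

lemma integral_cexp_neg_mul_Ioi {a : ℂ} (ha : 0 < a.re) :
    ∫ x : ℝ in Ioi 0, cexp (-(a * x)) = 1 / a := by
  simpa [neg_div] using integral_exp_mul_complex_Ioi (a := -a) (by simpa) 0

lemma integral_ofReal_pow_succ_mul_cexp_neg_mul_Ioi (m : ℕ) {a : ℂ} (ha : 0 < a.re) :
    ∫ x : ℝ in Ioi 0, (x : ℂ) ^ (m + 1) * cexp (-(a * x)) =
      (m + 1) / a * ∫ x : ℝ in Ioi 0, (x : ℂ) ^ m * cexp (-(a * x)) := by
  have ha0 : a ≠ 0 := fun h => by simp [h] at ha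
  have hderiv : ∀ x ∈ Ici (0 : ℝ),
      HasDerivAt (fun x : ℝ => -((x : ℂ) ^ (m + 1) * cexp (-(a * x))) / a)
        ((x : ℂ) ^ (m + 1) * cexp (-(a * x)) - (m + 1) / a * ((x : ℂ) ^ m * cexp (-(a * x))))
        x := by
    intro x _
    have hexp : HasDerivAt (fun x : ℝ => cexp (-(a * x))) (-a * cexp (-(a * x))) x := by
      simpa [mul_comm] using ((((hasDerivAt_id (x : ℂ)).const_mul a).neg).cexp).comp_ofReal
    have hpow : HasDerivAt (fun x : ℝ => (x : ℂ) ^ (m + 1)) ((m + 1) * (x : ℂ) ^ m) x := by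
      simpa using (hasDerivAt_pow (m + 1) (x : ℂ)).comp_ofReal
    exact (((hpow.mul hexp).neg).div_const a).congr_deriv (by field_simp; ring)
  have hint := integrableOn_ofReal_pow_mul_cexp_neg_mul_Ioi (m + 1) ha
  have hint' := (integrableOn_ofReal_pow_mul_cexp_neg_mul_Ioi m ha).const_mul ((m + 1) / a)
  have h := integral_Ioi_of_hasDerivAt_of_tendsto' hderiv (hint.sub hint')
    (by simpa using ((tendsto_ofReal_pow_mul_cexp_neg_mul_atTop (m + 1) ha).neg).div_const a)
  rw [integral_sub hint hint', integral_const_mul] at h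
  simpa [sub_eq_zero] using h

theorem integral_ofReal_pow_mul_cexp_neg_mul_Ioi (k : ℕ) {a : ℂ} (ha : 0 < a.re) :
    ∫ x : ℝ in Ioi 0, (x : ℂ) ^ k * cexp (-(a * x)) = k.factorial / a ^ (k + 1) := by
  have ha0 : a ≠ 0 := fun h => by simp [h] at ha
  induction k with
  | zero => simpa using integral_cexp_neg_mul_Ioi ha
  | succ m ih =>
    rw [integral_ofReal_pow_succ_mul_cexp_neg_mul_Ioi m ha, ih, Nat.factorial_succ]
    push_cast
    field_simp
    ring

lemma integrable_ofReal_mul_cexp_neg_I_mul {μ : Measure ℝ} {w : ℝ → ℝ} (hw : Integrable w μ)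
    (s : ℝ) : Integrable (fun x : ℝ => (w x : ℂ) * cexp (-(I * s * x))) μ :=
  hw.ofReal.mul_bdd (c := 1) (by fun_prop) (ae_of_all _ fun x => by simp [Complex.norm_exp])

lemma cexp_neg_I_mul_sub_mul (s t x : ℝ) :
    cexp (-(I * ↑(s - t) * x)) = cexp (-(I * s * x)) * conj (cexp (-(I * t * x))) := by
  rw [← Complex.exp_conj, ← Complex.exp_add]
  congr 1
  simp only [map_neg, map_mul, conj_I, conj_ofReal]
  push_cast
  ring

theorem sum_sum_integral_mul_cexp_mul_conj_eq_integral_normSq {ι : Type*} [Fintype ι]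
    {μ : Measure ℝ} {w : ℝ → ℝ} (hw : Integrable w μ) (t : ι → ℝ) (c : ι → ℂ) :
    ∑ j, ∑ l, (∫ x, (w x : ℂ) * cexp (-(I * ↑(t j - t l) * x)) ∂μ) * c j * conj (c l) =
      ↑(∫ x, w x * normSq (∑ j, c j * cexp (-(I * t j * x))) ∂μ) := by
  have hpointwise : ∀ x : ℝ,
      ∑ j, ∑ l, (w x : ℂ) * cexp (-(I * ↑(t j - t l) * x)) * c j * conj (c l) =
        ↑(w x * normSq (∑ j, c j * cexp (-(I * t j * x)))) := by
    intro x
    rw [ofReal_mul, ← mul_conj, map_sum, Finset.sum_mul_sum, Finset.mul_sum]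
    refine Finset.sum_congr rfl fun j _ => ?_
    rw [Finset.mul_sum]
    refine Finset.sum_congr rfl fun l _ => ?_
    rw [cexp_neg_I_mul_sub_mul, map_mul]
    ring
  have hint : ∀ j l, Integrable
      (fun x : ℝ => (w x : ℂ) * cexp (-(I * ↑(t j - t l) * x)) * c j * conj (c l)) μ :=
    fun j l => ((integrable_ofReal_mul_cexp_neg_I_mul hw _).mul_const _).mul_const _
  calc _ = ∑ j, ∑ l, ∫ x, (w x : ℂ) * cexp (-(I * ↑(t j - t l) * x)) * c j * conj (c l) ∂μ := by
        simp_rw [← integral_mul_const]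
    _ = ∫ x, ∑ j, ∑ l, (w x : ℂ) * cexp (-(I * ↑(t j - t l) * x)) * c j * conj (c l) ∂μ := by
        rw [integral_finsetSum _ fun j _ => integrable_finsetSum _ fun l _ => hint j l]
        exact Finset.sum_congr rfl fun j _ => (integral_finsetSum _ fun l _ => hint j l).symm
    _ = _ := (integral_congr_ae (ae_of_all _ hpointwise)).trans integral_ofReal

theorem stmt_2 (y : ℝ) (hy : 0 < y) (k : ℕ)
    (f : ℝ → ℂ) (hf : ∀ t : ℝ, f t = (k.factorial : ℂ) / ((y:ℂ) + Complex.I * t)^(k+1)) :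
    ∀ (n : ℕ) (t : Fin n → ℝ) (c : Fin n → ℂ),
      0 ≤ (∑ j, ∑ l, f (t j - t l) * c j * (starRingEnd ℂ) (c l)).re ∧
      (∑ j, ∑ l, f (t j - t l) * c j * (starRingEnd ℂ) (c l)).im = 0 := by
  intro n t c
  have hf_fourier : ∀ s : ℝ,
      f s = ∫ x in Ioi 0, ((x ^ k * Real.exp (-(y * x)) : ℝ) : ℂ) * cexp (-(I * s * x)) := by
    intro s
    rw [hf, ← integral_ofReal_pow_mul_cexp_neg_mul_Ioi k (a := y + I * s) (by simpa using hy)]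
    refine setIntegral_congr_fun measurableSet_Ioi fun x _ => ?_
    push_cast
    rw [mul_assoc, ← Complex.exp_add]
    ring_nf
  simp_rw [hf_fourier]
  rw [sum_sum_integral_mul_cexp_mul_conj_eq_integral_normSq
    (integrableOn_pow_mul_exp_neg_mul_Ioi k hy) t c, ofReal_re, ofReal_im]
  refine ⟨setIntegral_nonneg measurableSet_Ioi fun x (hx : 0 < x) => ?_, rfl⟩
  exact mul_nonneg (by positivity) (normSq_nonneg _)
end

section
/- Fix y ≠ 0 real, t ∈ ℝ, m ∈ ℕ, and z = t + iy. For complex h with z + h ∉ ℝ and h ≠ 0, define E_m(h, t) = (1/h)[1/(z+h−t')^{m+1} − 1/(z−t')^{m+1}] as a function of t' ∈ ℝ. Then for each fixed t' with z − t' ≠ 0, E_m(h, t') → −(m+1)/(z−t')^{m+2} as h → 0, and moreover this convergence is uniform over t' ∈ ℝ together with the bound: sup_{t'∈ℝ} (1+|t'|)^m |E_m(h,t') + (m+1)/(z−t')^{m+2}| → 0 as h → 0. -/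
/-!
The quantity in question is the error of the difference quotient of `w ↦ 1 / w ^ (m + 1)` at
`b = z - t'`. Applying the mean value inequality on the disc `‖w - b‖ ≤ ‖b‖ / 2` first to
`1 / w ^ k` and then to `1 / w ^ n + n w / b ^ (n + 1)` bounds this error by
`(m + 1) (m + 2) (2 / ‖b‖) ^ (m + 3) ‖h‖`. Since `‖b‖ ≥ |y|` and `1 + |t'| ≤ C ‖b‖`, the weight
`(1 + |t'|) ^ m` is absorbed, leaving a bound `B ‖h‖` uniform in `t'`.
-/

open Complex Metric

variable {𝕜 : Type*} [RCLike 𝕜]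

lemma hasDerivAt_one_div_pow (n : ℕ) {x : 𝕜} (hx : x ≠ 0) :
    HasDerivAt (fun w => 1 / w ^ n) (-n / x ^ (n + 1)) x := by
  have := hasDerivAt_zpow (-n : ℤ) x (.inl hx)
  simp only [one_div, ← zpow_natCast, ← zpow_neg]
  convert this using 1
  rw [show (-n : ℤ) - 1 = -((n + 1 : ℕ) : ℤ) by push_cast; ring, div_eq_mul_inv, zpow_neg]
  push_cast
  ring

lemma half_norm_le_norm_of_mem_closedBall {b x : 𝕜} (hx : x ∈ closedBall b (‖b‖ / 2)) :
    ‖b‖ / 2 ≤ ‖x‖ := by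
  have := norm_sub_norm_le b x
  rw [mem_closedBall, dist_eq_norm, norm_sub_rev] at hx
  linarith

lemma norm_one_div_pow_sub_one_div_pow_le (k : ℕ) {b w : 𝕜} (hb : b ≠ 0)
    (hw : ‖w - b‖ ≤ ‖b‖ / 2) :
    ‖1 / w ^ k - 1 / b ^ k‖ ≤ k * (2 / ‖b‖) ^ (k + 1) * ‖w - b‖ := by
  have hb' : 0 < ‖b‖ := norm_pos_iff.mpr hb
  have hne : ∀ x ∈ closedBall b (‖b‖ / 2), x ≠ 0 := fun x hx =>
    norm_pos_iff.mp ((half_pos hb').trans_le (half_norm_le_norm_of_mem_closedBall hx))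
  have hderiv : ∀ x ∈ closedBall b (‖b‖ / 2),
      HasDerivWithinAt (fun w : 𝕜 => 1 / w ^ k) (-k / x ^ (k + 1)) (closedBall b (‖b‖ / 2)) x :=
    fun x hx => (hasDerivAt_one_div_pow k (hne x hx)).hasDerivWithinAt
  have hbound : ∀ x ∈ closedBall b (‖b‖ / 2),
      ‖-(k : 𝕜) / x ^ (k + 1)‖ ≤ k * (2 / ‖b‖) ^ (k + 1) := by
    intro x hx
    have hx' := half_norm_le_norm_of_mem_closedBall hx
    have hinv : ‖x‖⁻¹ ≤ 2 / ‖b‖ := by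
      rw [inv_eq_one_div, div_le_div_iff₀ (by linarith) hb']
      linarith
    rw [norm_div, norm_neg, RCLike.norm_natCast, norm_pow, div_eq_mul_inv, ← inv_pow]
    gcongr
  exact (convex_closedBall b (‖b‖ / 2)).norm_image_sub_le_of_norm_hasDerivWithin_le hderiv hbound
    (mem_closedBall_self (by positivity)) (by rwa [mem_closedBall, dist_eq_norm])

lemma norm_slope_one_div_pow_add_le (n : ℕ) {b h : 𝕜} (hb : b ≠ 0) (hh : h ≠ 0)
    (hsmall : ‖h‖ ≤ ‖b‖ / 2) :
    ‖1 / h * (1 / (b + h) ^ n - 1 / b ^ n) + n / b ^ (n + 1)‖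
      ≤ n * (n + 1) * (2 / ‖b‖) ^ (n + 2) * ‖h‖ := by
  set C := n * (n + 1) * (2 / ‖b‖) ^ (n + 2) * ‖h‖
  have hb' : 0 < ‖b‖ := norm_pos_iff.mpr hb
  have hne : ∀ x ∈ closedBall b ‖h‖, x ≠ 0 := fun x hx =>
    norm_pos_iff.mp ((half_pos hb').trans_le
      (half_norm_le_norm_of_mem_closedBall (closedBall_subset_closedBall hsmall hx)))
  have hderiv : ∀ x ∈ closedBall b ‖h‖,
      HasDerivWithinAt (fun w : 𝕜 => 1 / w ^ n + n / b ^ (n + 1) * w)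
        (-n / x ^ (n + 1) + n / b ^ (n + 1)) (closedBall b ‖h‖) x := fun x hx =>
    ((hasDerivAt_one_div_pow n (hne x hx)).add ((hasDerivAt_id x).const_mul _)
      |>.congr_deriv (by ring)).hasDerivWithinAt
  have hbound : ∀ x ∈ closedBall b ‖h‖, ‖-(n : 𝕜) / x ^ (n + 1) + n / b ^ (n + 1)‖ ≤ C := by
    intro x hx
    rw [mem_closedBall, dist_eq_norm] at hx
    rw [show -(n : 𝕜) / x ^ (n + 1) + n / b ^ (n + 1) = -n * (1 / x ^ (n + 1) - 1 / b ^ (n + 1))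
      by ring, norm_mul, norm_neg, RCLike.norm_natCast]
    have := norm_one_div_pow_sub_one_div_pow_le (n + 1) hb (hx.trans hsmall)
    push_cast at this
    calc (n : ℝ) * ‖1 / x ^ (n + 1) - 1 / b ^ (n + 1)‖
        ≤ n * ((n + 1) * (2 / ‖b‖) ^ (n + 2) * ‖x - b‖) := by gcongr
      _ = n * (n + 1) * (2 / ‖b‖) ^ (n + 2) * ‖x - b‖ := by ring
      _ ≤ C := mul_le_mul_of_nonneg_left hx (by positivity)
  have hmvt := (convex_closedBall b ‖h‖).norm_image_sub_le_of_norm_hasDerivWithin_le hderiv hbound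
    (mem_closedBall_self (norm_nonneg h)) (y := b + h) (by simp [mem_closedBall, dist_eq_norm])
  have hdiff : 1 / (b + h) ^ n + n / b ^ (n + 1) * (b + h) - (1 / b ^ n + n / b ^ (n + 1) * b)
      = h * (1 / h * (1 / (b + h) ^ n - 1 / b ^ n) + n / b ^ (n + 1)) := by
    field_simp
    ring
  rw [hdiff, add_sub_cancel_left, norm_mul] at hmvt
  exact le_of_mul_le_mul_right (by linarith) (norm_pos_iff.mpr hh)

lemma abs_im_le_norm_sub_ofReal (z : ℂ) (s : ℝ) : |z.im| ≤ ‖z - s‖ := by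
  simpa using abs_im_le_norm (z - s)

lemma one_add_abs_le_mul_norm_sub_ofReal {z : ℂ} (hz : z.im ≠ 0) (s : ℝ) :
    1 + |s| ≤ ((1 + ‖z‖) / |z.im| + 1) * ‖z - s‖ := by
  have hs : |s| ≤ ‖z‖ + ‖z - s‖ := by simpa [norm_sub_rev] using norm_le_insert' (s : ℂ) z
  have hz' : 1 + ‖z‖ ≤ (1 + ‖z‖) / |z.im| * ‖z - s‖ := by
    rw [div_mul_eq_mul_div, le_div_iff₀ (abs_pos.mpr hz)]
    exact mul_le_mul_of_nonneg_left (abs_im_le_norm_sub_ofReal z s) (by positivity)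
  linarith

lemma exists_weighted_norm_slope_one_div_pow_le {z : ℂ} (hz : z.im ≠ 0) (m : ℕ) :
    ∃ B > 0, ∀ h : ℂ, h ≠ 0 → ‖h‖ ≤ |z.im| / 2 → ∀ s : ℝ,
      (1 + |s|) ^ m * ‖1 / h * (1 / (z + h - s) ^ (m + 1) - 1 / (z - s) ^ (m + 1))
        + (m + 1 : ℂ) / (z - s) ^ (m + 2)‖ ≤ B * ‖h‖ := by
  set C := (1 + ‖z‖) / |z.im| + 1
  have hy : 0 < |z.im| := abs_pos.mpr hz
  refine ⟨C ^ m * ((m + 1) * (m + 2) * 2 ^ (m + 3)) / |z.im| ^ 3, by positivity, ?_⟩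
  intro h hh hsmall s
  have hb := abs_im_le_norm_sub_ofReal z s
  have hb' : 0 < ‖z - s‖ := hy.trans_le hb
  have hslope := norm_slope_one_div_pow_add_le (m + 1) (norm_pos_iff.mp hb') hh (by linarith)
  rw [show z - s + h = z + h - s by ring] at hslope
  push_cast at hslope
  calc (1 + |s|) ^ m * ‖1 / h * (1 / (z + h - s) ^ (m + 1) - 1 / (z - s) ^ (m + 1))
        + (m + 1 : ℂ) / (z - s) ^ (m + 2)‖
      ≤ (C * ‖z - s‖) ^ m * ((m + 1) * (m + 2) * (2 / ‖z - s‖) ^ (m + 3) * ‖h‖) := by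
        gcongr
        · exact one_add_abs_le_mul_norm_sub_ofReal hz s
        · exact hslope.trans_eq (by ring)
    _ = C ^ m * ((m + 1) * (m + 2) * 2 ^ (m + 3)) / ‖z - s‖ ^ 3 * ‖h‖ := by
        rw [mul_pow, div_pow]
        field_simp
        ring
    _ ≤ C ^ m * ((m + 1) * (m + 2) * 2 ^ (m + 3)) / |z.im| ^ 3 * ‖h‖ := by gcongr

theorem stmt_12 (y t : ℝ) (hy : y ≠ 0) (m : ℕ) (z : ℂ) (hz : z = t + Complex.I * y)
    (E : ℂ → ℝ → ℂ)
    (hE : ∀ (h : ℂ) (t' : ℝ), E h t' =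
      (1/h) * (1/(z + h - t')^(m+1) - 1/(z - t')^(m+1))) :
    (∀ t' : ℝ,
      Filter.Tendsto (fun h : ℂ => E h t')
        (nhdsWithin 0 {h : ℂ | h ≠ 0 ∧ (z + h).im ≠ 0})
        (nhds (-(m+1 : ℂ)/(z - t')^(m+2)))) ∧
    (∀ ε : ℝ, 0 < ε → ∃ δ : ℝ, 0 < δ ∧ ∀ h : ℂ, h ≠ 0 → (z + h).im ≠ 0 → ‖h‖ < δ →
      ∀ t' : ℝ, (1 + |t'|)^m * ‖E h t' + (m+1 : ℂ)/(z - t')^(m+2)‖ < ε) := by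
  have him : z.im ≠ 0 := by simpa [hz] using hy
  obtain ⟨B, hB, hbound⟩ := exists_weighted_norm_slope_one_div_pow_le him m
  have huniform : ∀ ε : ℝ, 0 < ε → ∃ δ : ℝ, 0 < δ ∧ ∀ h : ℂ, h ≠ 0 → (z + h).im ≠ 0 → ‖h‖ < δ →
      ∀ t' : ℝ, (1 + |t'|)^m * ‖E h t' + (m+1 : ℂ)/(z - t')^(m+2)‖ < ε := by
    intro ε hε
    refine ⟨min (|z.im| / 2) (ε / B), lt_min (half_pos (abs_pos.mpr him)) (div_pos hε hB),
      fun h hh _ hδ t' => ?_⟩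
    rw [hE]
    calc _ ≤ B * ‖h‖ := hbound h hh (hδ.le.trans (min_le_left _ _)) t'
      _ < B * (ε / B) := mul_lt_mul_of_pos_left (hδ.trans_le (min_le_right _ _)) hB
      _ = ε := mul_div_cancel₀ ε hB.ne'
  refine ⟨fun t' => tendsto_nhdsWithin_nhds.mpr fun ε hε => ?_, huniform⟩
  obtain ⟨δ, hδ, hδε⟩ := huniform ε hε
  refine ⟨δ, hδ, fun h ⟨hh, him'⟩ hdist => ?_⟩
  rw [dist_zero_right] at hdist
  rw [dist_eq_norm, neg_div, sub_neg_eq_add]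
  have hweight : 1 ≤ (1 + |t'|) ^ m := one_le_pow₀ (by linarith [abs_nonneg t'])
  exact (le_mul_of_one_le_left (norm_nonneg _) hweight).trans_lt (hδε h hh him' hdist t')
end
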